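/- Let 𝓕 be an ω-closed family of subsets of ℕ with ∅ ∈ 𝓕 and such that 𝓕 contains at least one nonempty set, and let I = ℤ × ℤ × {∅} ⊆ S(𝓕). Then the only two-sided ideals of S(𝓕) are I and S(𝓕) (equivalently, the Rees quotient S(𝓕)/I is 0-simple) if and only if for all nonempty F₁, F₂ ∈ 𝓕 there exist k₁, k₂ ∈ ℕ such that F₁ ⊆ −k₁ + F₂ and F₂ ⊆ −k₂ + F₁. -/

import Mathlib

/-!
Write `F ≼ G` (`ShiftLE F G`) when `F ⊆ -k + G` for some `k : ℕ`. The set component of a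
product is `≼` both factors, so for each `G ∈ 𝓕` the triples whose set is `≼ G` form an ideal;
when `G ≠ ∅` it is not `I`, so if it is all of `S(𝓕)` then every member of `𝓕` is `≼ G`.
Conversely, if `F ⊆ -k + F₀` then `(i, j, F₀) · (j + k, b, F) = (i + k, b, F)`, and multiplying
on the left by `(a, i + k, F)` gives `(a, b, F)`. Hence an ideal contains `I` (take `F = ∅`), and
if it contains one triple with a nonempty set then, under mutual domination, it contains all
of `S(𝓕)`.
-/

/-- `zshift n F = {n + k : k ∈ F}`. -/
def zshift (n : ℤ) (F : Set ℤ) : Set ℤ := {m : ℤ | ∃ k ∈ F, m = n + k}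

/-- A family of subsets of `ℕ` (viewed as subsets of `ℤ`) is `ω`-closed if it consists of
sets of nonnegative integers and `F₁ ∩ (-n + F₂)` belongs to the family for all `n : ℕ`
and all members `F₁, F₂` of the family. -/
def OmegaClosed (𝓕 : Set (Set ℤ)) : Prop :=
  (∀ F ∈ 𝓕, ∀ x ∈ F, 0 ≤ x) ∧
    ∀ n : ℕ, ∀ F₁ ∈ 𝓕, ∀ F₂ ∈ 𝓕, F₁ ∩ zshift (-(n : ℤ)) F₂ ∈ 𝓕

/-- The binary operation on triples `(i, j, F)`:
`(i₁,j₁,F₁)·(i₂,j₂,F₂) = (i₁−j₁+i₂, j₂, (j₁−i₂+F₁) ∩ F₂)` if `j₁ < i₂`;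
`(i₁, j₂, F₁ ∩ F₂)` if `j₁ = i₂`; `(i₁, j₁−i₂+j₂, F₁ ∩ (i₂−j₁+F₂))` if `j₁ > i₂`. -/
def smul3 (x y : ℤ × ℤ × Set ℤ) : ℤ × ℤ × Set ℤ :=
  if x.2.1 < y.1 then
    (x.1 - x.2.1 + y.1, y.2.1, zshift (x.2.1 - y.1) x.2.2 ∩ y.2.2)
  else if x.2.1 = y.1 then
    (x.1, y.2.1, x.2.2 ∩ y.2.2)
  else
    (x.1, x.2.1 - y.1 + y.2.1, x.2.2 ∩ zshift (y.1 - x.2.1) y.2.2)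

/-- The carrier of the semigroup `S(𝓕)`: all triples whose third component lies in `𝓕`. -/
def Scar (𝓕 : Set (Set ℤ)) : Set (ℤ × ℤ × Set ℤ) := {x | x.2.2 ∈ 𝓕}

lemma zshift_zero (F : Set ℤ) : zshift 0 F = F := by
  ext m; simp [zshift]

lemma zshift_mono {A B : Set ℤ} (n : ℤ) (hAB : A ⊆ B) : zshift n A ⊆ zshift n B := by
  rintro m ⟨k, hk, rfl⟩; exact ⟨k, hAB hk, rfl⟩

lemma zshift_zshift (m n : ℤ) (F : Set ℤ) : zshift m (zshift n F) = zshift (m + n) F := by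
  ext x
  constructor
  · rintro ⟨k, ⟨l, hl, rfl⟩, rfl⟩; exact ⟨l, hl, by ring⟩
  · rintro ⟨l, hl, rfl⟩; exact ⟨n + l, ⟨l, hl, rfl⟩, by ring⟩

lemma OmegaClosed.inter_zshift_mem {𝓕 : Set (Set ℤ)} (h : OmegaClosed 𝓕) {F₁ F₂ : Set ℤ}
    (hF₁ : F₁ ∈ 𝓕) (hF₂ : F₂ ∈ 𝓕) {n : ℤ} (hn : n ≤ 0) : F₁ ∩ zshift n F₂ ∈ 𝓕 := by
  obtain ⟨k, rfl⟩ : ∃ k : ℕ, n = -(k : ℤ) := ⟨(-n).toNat, by omega⟩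
  exact h.2 k F₁ hF₁ F₂ hF₂

lemma OmegaClosed.smul3_mem_Scar {𝓕 : Set (Set ℤ)} (h : OmegaClosed 𝓕)
    {x y : ℤ × ℤ × Set ℤ} (hx : x ∈ Scar 𝓕) (hy : y ∈ Scar 𝓕) : smul3 x y ∈ Scar 𝓕 := by
  change x.2.2 ∈ 𝓕 at hx
  change y.2.2 ∈ 𝓕 at hy
  change (smul3 x y).2.2 ∈ 𝓕
  unfold smul3
  split_ifs with hlt heq
  · rw [Set.inter_comm]; exact h.inter_zshift_mem hy hx (by omega)
  · simpa only [zshift_zero] using h.inter_zshift_mem hx hy le_rfl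
  · exact h.inter_zshift_mem hx hy (by omega)

lemma smul3_of_eq (a c b : ℤ) (F G : Set ℤ) :
    smul3 (a, c, F) (c, b, G) = (a, b, F ∩ G) := by
  simp [smul3]

lemma smul3_add_nat (i j b : ℤ) (k : ℕ) (F G : Set ℤ) :
    smul3 (i, j, F) (j + k, b, G) = (i + k, b, zshift (-(k : ℤ)) F ∩ G) := by
  rcases Nat.eq_zero_or_pos k with rfl | hk
  · simp [smul3, zshift_zero]
  · have hlt : j < j + k := by omega
    simp only [smul3, if_pos hlt]
    rw [show i - j + (j + k) = i + k by ring, show j - (j + k) = -(k : ℤ) by ring]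

def ShiftLE (F G : Set ℤ) : Prop := ∃ k : ℕ, F ⊆ zshift (-(k : ℤ)) G

lemma ShiftLE.of_subset_zshift {F G : Set ℤ} {n : ℤ} (hn : n ≤ 0) (h : F ⊆ zshift n G) :
    ShiftLE F G :=
  ⟨(-n).toNat, by rwa [show -((-n).toNat : ℤ) = n by omega]⟩

lemma ShiftLE.of_subset {F G : Set ℤ} (h : F ⊆ G) : ShiftLE F G :=
  of_subset_zshift le_rfl (by rwa [zshift_zero])

lemma ShiftLE.trans {F G H : Set ℤ} (hFG : ShiftLE F G) (hGH : ShiftLE G H) : ShiftLE F H := by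
  obtain ⟨m, hm⟩ := hFG
  obtain ⟨n, hn⟩ := hGH
  refine of_subset_zshift (n := -(m : ℤ) + -(n : ℤ)) (by omega) ?_
  rw [← zshift_zshift]
  exact hm.trans (zshift_mono _ hn)

lemma shiftLE_smul3_left (x y : ℤ × ℤ × Set ℤ) : ShiftLE (smul3 x y).2.2 x.2.2 := by
  unfold smul3
  split_ifs with hlt heq
  · exact .of_subset_zshift (by omega) Set.inter_subset_left
  · exact .of_subset Set.inter_subset_left
  · exact .of_subset Set.inter_subset_left

lemma shiftLE_smul3_right (x y : ℤ × ℤ × Set ℤ) : ShiftLE (smul3 x y).2.2 y.2.2 := by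
  unfold smul3
  split_ifs with hlt heq
  · exact .of_subset Set.inter_subset_right
  · exact .of_subset Set.inter_subset_right
  · exact .of_subset_zshift (by omega) Set.inter_subset_right

def Absorbing (𝓕 : Set (Set ℤ)) (J : Set (ℤ × ℤ × Set ℤ)) : Prop :=
  ∀ x ∈ J, ∀ s ∈ Scar 𝓕, smul3 s x ∈ J ∧ smul3 x s ∈ J

def shiftIdeal (𝓕 : Set (Set ℤ)) (G : Set ℤ) : Set (ℤ × ℤ × Set ℤ) :=
  {x | x ∈ Scar 𝓕 ∧ ShiftLE x.2.2 G}

lemma absorbing_shiftIdeal {𝓕 : Set (Set ℤ)} (h : OmegaClosed 𝓕) (G : Set ℤ) :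
    Absorbing 𝓕 (shiftIdeal 𝓕 G) := by
  rintro x ⟨hx, hxG⟩ s hs
  exact ⟨⟨h.smul3_mem_Scar hs hx, (shiftLE_smul3_right s x).trans hxG⟩,
    ⟨h.smul3_mem_Scar hx hs, (shiftLE_smul3_left x s).trans hxG⟩⟩

lemma Absorbing.mem_of_shiftLE {𝓕 : Set (Set ℤ)} {J : Set (ℤ × ℤ × Set ℤ)}
    (hJ : Absorbing 𝓕 J) {i j : ℤ} {F₀ : Set ℤ} (hx : (i, j, F₀) ∈ J) {F : Set ℤ}
    (hF : F ∈ 𝓕) (hFF₀ : ShiftLE F F₀) (a b : ℤ) : (a, b, F) ∈ J := by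
  obtain ⟨k, hk⟩ := hFF₀
  have hright := (hJ _ hx (j + k, b, F) hF).2
  rw [smul3_add_nat, Set.inter_eq_right.mpr hk] at hright
  simpa only [smul3_of_eq, Set.inter_self] using (hJ _ hright (a, i + k, F) hF).1

lemma Absorbing.empty_mem {𝓕 : Set (Set ℤ)} (hempty : ∅ ∈ 𝓕) {J : Set (ℤ × ℤ × Set ℤ)}
    (hJ : Absorbing 𝓕 J) (hJne : J.Nonempty) (a b : ℤ) : (a, b, ∅) ∈ J := by
  obtain ⟨⟨i, j, F₀⟩, hx⟩ := hJne
  exact hJ.mem_of_shiftLE hx hempty (.of_subset F₀.empty_subset) a b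

lemma Absorbing.eq_Scar {𝓕 : Set (Set ℤ)} (hempty : ∅ ∈ 𝓕) {J : Set (ℤ × ℤ × Set ℤ)}
    (hJ : Absorbing 𝓕 J) (hJsub : J ⊆ Scar 𝓕) {i j : ℤ} {F₀ : Set ℤ} (hx : (i, j, F₀) ∈ J)
    (hdom : ∀ F ∈ 𝓕, F.Nonempty → ShiftLE F F₀) : J = Scar 𝓕 := by
  refine hJsub.antisymm ?_
  rintro ⟨a, b, F⟩ hF
  obtain rfl | hFne := F.eq_empty_or_nonempty
  · exact hJ.empty_mem hempty ⟨_, hx⟩ a b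
  · exact hJ.mem_of_shiftLE hx hF (hdom F hF hFne) a b

lemma Absorbing.eq_setOf_empty {𝓕 : Set (Set ℤ)} (hempty : ∅ ∈ 𝓕) {J : Set (ℤ × ℤ × Set ℤ)}
    (hJ : Absorbing 𝓕 J) (hJne : J.Nonempty) (hJempty : ∀ x ∈ J, x.2.2 = ∅) :
    J = {x | x.2.2 = ∅} := by
  ext ⟨a, b, F⟩
  refine ⟨hJempty _, ?_⟩
  rintro (rfl : F = ∅)
  exact hJ.empty_mem hempty hJne a b

lemma shiftIdeal_ne_setOf_empty {𝓕 : Set (Set ℤ)} {G : Set ℤ} (hG : G ∈ 𝓕)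
    (hGne : G.Nonempty) : shiftIdeal 𝓕 G ≠ {x | x.2.2 = ∅} := fun hI ↦
  have hGmem : ((0, 0, G) : ℤ × ℤ × Set ℤ) ∈ shiftIdeal 𝓕 G := ⟨hG, .of_subset le_rfl⟩
  hGne.ne_empty (hI ▸ hGmem : ((0, 0, G) : ℤ × ℤ × Set ℤ) ∈ {x : ℤ × ℤ × Set ℤ | x.2.2 = ∅})

lemma shiftLE_of_shiftIdeal_eq_Scar {𝓕 : Set (Set ℤ)} {G : Set ℤ}
    (hS : shiftIdeal 𝓕 G = Scar 𝓕) {F : Set ℤ} (hF : F ∈ 𝓕) : ShiftLE F G :=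
  (hS ▸ hF : ((0, 0, F) : ℤ × ℤ × Set ℤ) ∈ shiftIdeal 𝓕 G).2

theorem stmt11_general (𝓕 : Set (Set ℤ)) (h : OmegaClosed 𝓕) (hempty : (∅ : Set ℤ) ∈ 𝓕) :
    (∀ J : Set (ℤ × ℤ × Set ℤ), J.Nonempty → J ⊆ Scar 𝓕 →
      (∀ x ∈ J, ∀ s ∈ Scar 𝓕, smul3 s x ∈ J ∧ smul3 x s ∈ J) →
      J = {x : ℤ × ℤ × Set ℤ | x.2.2 = (∅ : Set ℤ)} ∨ J = Scar 𝓕) ↔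
    (∀ F₁ ∈ 𝓕, ∀ F₂ ∈ 𝓕, F₁.Nonempty → F₂.Nonempty →
      ∃ k₁ k₂ : ℕ, F₁ ⊆ zshift (-(k₁ : ℤ)) F₂ ∧ F₂ ⊆ zshift (-(k₂ : ℤ)) F₁) := by
  simp only [exists_and_left, exists_and_right]
  constructor
  · intro hideal
    have dominates : ∀ G ∈ 𝓕, G.Nonempty → ∀ F ∈ 𝓕, ShiftLE F G := fun G hG hGne F hF ↦ by
      have hGmem : ((0, 0, G) : ℤ × ℤ × Set ℤ) ∈ shiftIdeal 𝓕 G := ⟨hG, .of_subset le_rfl⟩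
      rcases hideal _ ⟨_, hGmem⟩ (fun _ hx ↦ hx.1) (absorbing_shiftIdeal h G) with hI | hS
      · exact absurd hI (shiftIdeal_ne_setOf_empty hG hGne)
      · exact shiftLE_of_shiftIdeal_eq_Scar hS hF
    exact fun F₁ hF₁ F₂ hF₂ hF₁ne hF₂ne ↦
      ⟨dominates F₂ hF₂ hF₂ne F₁ hF₁, dominates F₁ hF₁ hF₁ne F₂ hF₂⟩
  · intro hdom J hJne hJsub (hJ : Absorbing 𝓕 J)
    by_cases hsome : ∃ x ∈ J, x.2.2.Nonempty
    · obtain ⟨⟨i, j, F₀⟩, hx, hF₀ne⟩ := hsome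
      exact .inr <| hJ.eq_Scar hempty hJsub hx fun F hF hFne ↦
        (hdom F hF F₀ (hJsub hx) hFne hF₀ne).1
    · refine .inl (hJ.eq_setOf_empty hempty hJne fun x hx ↦ ?_)
      exact Set.not_nonempty_iff_eq_empty.mp fun hne ↦ hsome ⟨x, hx, hne⟩

/-- `0`-simplicity criterion for `S(𝓕)` when `∅ ∈ 𝓕` and `𝓕` contains a
nonempty set: the only two-sided ideals of `S(𝓕)` are `I = ℤ × ℤ × {∅}` and `S(𝓕)`
iff any two nonempty members of `𝓕` dominate each other up to shifts. -/
theorem stmt11 (𝓕 : Set (Set ℤ)) (h : OmegaClosed 𝓕) (hempty : (∅ : Set ℤ) ∈ 𝓕)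
    (hne : ∃ F ∈ 𝓕, F.Nonempty) :
    (∀ J : Set (ℤ × ℤ × Set ℤ), J.Nonempty → J ⊆ Scar 𝓕 →
      (∀ x ∈ J, ∀ s ∈ Scar 𝓕, smul3 s x ∈ J ∧ smul3 x s ∈ J) →
      J = {x : ℤ × ℤ × Set ℤ | x.2.2 = (∅ : Set ℤ)} ∨ J = Scar 𝓕) ↔
    (∀ F₁ ∈ 𝓕, ∀ F₂ ∈ 𝓕, F₁.Nonempty → F₂.Nonempty →
      ∃ k₁ k₂ : ℕ, F₁ ⊆ zshift (-(k₁ : ℤ)) F₂ ∧ F₂ ⊆ zshift (-(k₂ : ℤ)) F₁) :=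
  stmt11_general 𝓕 h hempty
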